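/- For every μ > 0, lim_{x→0⁺} x ∫_0^∞ τ² e^{−xτ}/(μ²+τ²) dτ = 1; equivalently, lim_{x→0⁺} x·K_μ′(x) = −√(2/π). -/

import Mathlib

/-!
Splitting `τ² / (μ² + τ²) = 1 - μ² / (μ² + τ²)`, the constant part contributes exactly
`x ∫₀^∞ e^{-xτ} dτ = 1`, while the remainder is integrable on `(0, ∞)`, so `x` times its
damped integral is at most `x` times its `L¹` norm and tends to `0`. The derivative of `K_μ` is
computed by differentiating under the integral sign, the integrand `τ e^{-yτ} / (μ² + τ²)` having
bounded profile `τ / (μ² + τ²) ≤ 1 / (2μ)`, so that `τ e^{-x τ / 2}` dominates its `y`-derivative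
for `y` near `x`.
-/

open MeasureTheory Set Filter

/-- The kernel `K_μ(x) = √(2/π) ∫_0^∞ τ e^{−|x|τ}/(μ²+τ²) dτ`. -/
noncomputable def Kmu (μ x : ℝ) : ℝ :=
  Real.sqrt (2 / Real.pi) * ∫ τ in Ioi (0:ℝ), τ * Real.exp (-|x| * τ) / (μ ^ 2 + τ ^ 2)

open Real Topology

theorem mul_integral_exp_neg_mul_Ioi {x : ℝ} (hx : 0 < x) :
    x * ∫ τ in Ioi (0:ℝ), exp (-x * τ) = 1 := by
  rw [integral_exp_mul_Ioi (neg_neg_of_pos hx), mul_zero, exp_zero]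
  field_simp

theorem integrableOn_mul_exp_neg_mul {g : ℝ → ℝ} (hg : IntegrableOn g (Ioi 0)) {x : ℝ}
    (hx : 0 ≤ x) : IntegrableOn (fun τ => g τ * exp (-x * τ)) (Ioi 0) := by
  refine hg.mul_bdd (by fun_prop) (c := 1) ?_
  filter_upwards [ae_restrict_mem measurableSet_Ioi] with τ hτ
  rw [norm_of_nonneg (exp_pos _).le, exp_le_one_iff]
  nlinarith [mem_Ioi.mp hτ]

theorem tendsto_mul_integral_mul_exp_neg_mul_zero {g : ℝ → ℝ} (hg : IntegrableOn g (Ioi 0)) :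
    Tendsto (fun x => x * ∫ τ in Ioi (0:ℝ), g τ * exp (-x * τ)) (𝓝[>] 0) (𝓝 0) := by
  have hlin : Tendsto (fun x => x * ∫ τ in Ioi (0:ℝ), ‖g τ‖) (𝓝[>] 0) (𝓝 0) := by
    simpa using ((tendsto_id (x := 𝓝 (0:ℝ))).mul_const _).mono_left nhdsWithin_le_nhds
  refine squeeze_zero_norm' ?_ hlin
  filter_upwards [self_mem_nhdsWithin] with x (hx : 0 < x)
  rw [norm_mul, norm_of_nonneg hx.le]
  refine mul_le_mul_of_nonneg_left (norm_integral_le_of_norm_le hg.norm ?_) hx.le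
  filter_upwards [ae_restrict_mem measurableSet_Ioi] with τ (hτ : 0 < τ)
  rw [norm_mul, norm_of_nonneg (exp_pos _).le]
  exact mul_le_of_le_one_right (norm_nonneg _) (exp_le_one_iff.mpr (by nlinarith))

theorem tendsto_mul_integral_mul_exp_neg_mul {f : ℝ → ℝ} {c : ℝ}
    (hf : IntegrableOn (fun τ => f τ - c) (Ioi 0)) :
    Tendsto (fun x => x * ∫ τ in Ioi (0:ℝ), f τ * exp (-x * τ)) (𝓝[>] 0) (𝓝 c) := by
  have hlim := (tendsto_mul_integral_mul_exp_neg_mul_zero hf).add_const c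
  rw [zero_add] at hlim
  refine hlim.congr' ?_
  filter_upwards [self_mem_nhdsWithin] with x (hx : 0 < x)
  have hsplit : ∫ τ in Ioi (0:ℝ), f τ * exp (-x * τ)
      = (∫ τ in Ioi (0:ℝ), (f τ - c) * exp (-x * τ)) + c * ∫ τ in Ioi (0:ℝ), exp (-x * τ) := by
    rw [← integral_const_mul, ← integral_add (integrableOn_mul_exp_neg_mul hf hx.le)
      ((exp_neg_integrableOn_Ioi 0 hx).const_mul c)]
    congr 1 with τ
    ring
  rw [hsplit, mul_add, mul_left_comm, mul_integral_exp_neg_mul_Ioi hx, mul_one]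

theorem hasDerivAt_integral_mul_exp_neg_mul {h : ℝ → ℝ} {C x : ℝ}
    (hh : AEStronglyMeasurable h (volume.restrict (Ioi 0))) (hC : ∀ τ, ‖h τ‖ ≤ C) (hx : 0 < x) :
    HasDerivAt (fun y => ∫ τ in Ioi (0:ℝ), h τ * exp (-y * τ))
      (-∫ τ in Ioi (0:ℝ), τ * h τ * exp (-x * τ)) x := by
  have hdom : IntegrableOn (fun τ => C * (τ * exp (-(x / 2) * τ))) (Ioi 0) := by
    have := integrableOn_rpow_mul_exp_neg_mul_rpow (s := 1) (by norm_num) one_pos (half_pos hx)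
    simp only [rpow_one] at this
    exact this.const_mul C
  have hmain := hasDerivAt_integral_of_dominated_loc_of_deriv_le
    (F := fun y τ => h τ * exp (-y * τ)) (F' := fun y τ => -(τ * h τ * exp (-y * τ)))
    (Metric.ball_mem_nhds x (half_pos hx))
    (Eventually.of_forall fun y => hh.mul (by fun_prop))
    ((exp_neg_integrableOn_Ioi 0 hx).bdd_mul hh (Eventually.of_forall hC))
    (((continuous_id.aestronglyMeasurable.mul hh).mul (by fun_prop)).neg) ?_ hdom ?_
  · exact hmain.2.congr_deriv (integral_neg _)
  · filter_upwards [ae_restrict_mem measurableSet_Ioi] with τ (hτ : 0 < τ) y hy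
    have hy : x / 2 ≤ y := by
      have := (abs_lt.mp (Metric.mem_ball.mp hy)).1
      linarith
    have hexp : exp (-y * τ) ≤ exp (-(x / 2) * τ) := exp_le_exp.mpr (by nlinarith)
    calc ‖-(τ * h τ * exp (-y * τ))‖ = τ * ‖h τ‖ * exp (-y * τ) := by
          rw [norm_neg, norm_mul, norm_mul, norm_of_nonneg hτ.le, norm_of_nonneg (exp_pos _).le]
      _ ≤ τ * C * exp (-(x / 2) * τ) :=
          mul_le_mul (by gcongr; exact hC τ) hexp (exp_pos _).le
            (mul_nonneg hτ.le ((norm_nonneg _).trans (hC τ)))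
      _ = C * (τ * exp (-(x / 2) * τ)) := by ring
  · refine Eventually.of_forall fun τ y _ => ?_
    exact ((((hasDerivAt_neg y).mul_const τ).exp.const_mul (h τ))).congr_deriv (by ring)

theorem abs_div_sq_add_sq_le {μ : ℝ} (hμ : 0 < μ) (τ : ℝ) :
    |τ / (μ ^ 2 + τ ^ 2)| ≤ (2 * μ)⁻¹ := by
  rw [abs_div, abs_of_pos (by positivity : 0 < μ ^ 2 + τ ^ 2), div_le_iff₀ (by positivity), ← div_eq_inv_mul,
    le_div_iff₀ (by positivity)]
  nlinarith [sq_nonneg (|τ| - μ), sq_abs τ]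

theorem hasDerivAt_Kmu {μ x : ℝ} (hμ : 0 < μ) (hx : 0 < x) :
    HasDerivAt (Kmu μ)
      (-√(2 / π) * ∫ τ in Ioi (0:ℝ), τ ^ 2 * exp (-x * τ) / (μ ^ 2 + τ ^ 2)) x := by
  have hKmu : (fun y => √(2 / π) * ∫ τ in Ioi (0:ℝ), τ / (μ ^ 2 + τ ^ 2) * exp (-y * τ))
      =ᶠ[𝓝 x] Kmu μ := by
    filter_upwards [Ioi_mem_nhds hx] with y (hy : 0 < y)
    simp only [Kmu, abs_of_pos hy, div_mul_eq_mul_div]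
  have hderiv := (hasDerivAt_integral_mul_exp_neg_mul
    (by fun_prop : Measurable fun τ : ℝ => τ / (μ ^ 2 + τ ^ 2)).aestronglyMeasurable
    (fun τ => abs_div_sq_add_sq_le hμ τ) hx).const_mul √(2 / π)
  refine (hderiv.congr_of_eventuallyEq hKmu.symm).congr_deriv ?_
  rw [mul_neg, neg_mul]
  congr 2
  refine integral_congr_ae (Eventually.of_forall fun τ => ?_)
  simp only
  ring

/-- For every `μ > 0`, `lim_{x→0⁺} x ∫_0^∞ τ² e^{−xτ}/(μ²+τ²) dτ = 1`;
equivalently, `lim_{x→0⁺} x·K_μ′(x) = −√(2/π)`. -/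
theorem Kmu_deriv_asymptotics_at_zero (μ : ℝ) (hμ : 0 < μ) :
    Tendsto (fun x : ℝ => x * ∫ τ in Ioi (0:ℝ), τ ^ 2 * Real.exp (-x * τ) / (μ ^ 2 + τ ^ 2))
      (nhdsWithin 0 (Ioi 0)) (nhds 1) ∧
    Tendsto (fun x : ℝ => x * deriv (Kmu μ) x)
      (nhdsWithin 0 (Ioi 0)) (nhds (-Real.sqrt (2 / Real.pi))) := by
  have hrem : IntegrableOn (fun τ => τ ^ 2 / (μ ^ 2 + τ ^ 2) - 1) (Ioi 0) := by
    refine (integrable_inv_one_add_sq.comp_div hμ.ne').neg.integrableOn.congr_fun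
      (fun τ _ => ?_) measurableSet_Ioi
    simp only [Pi.neg_apply]
    field_simp
    ring
  have hlim : Tendsto (fun x : ℝ => x * ∫ τ in Ioi (0:ℝ), τ ^ 2 * exp (-x * τ) / (μ ^ 2 + τ ^ 2))
      (𝓝[>] 0) (𝓝 1) := by
    simpa only [div_mul_eq_mul_div] using tendsto_mul_integral_mul_exp_neg_mul hrem
  refine ⟨hlim, ?_⟩
  have hderiv := hlim.const_mul (-√(2 / π))
  rw [mul_one] at hderiv
  refine hderiv.congr' ?_
  filter_upwards [self_mem_nhdsWithin] with x (hx : 0 < x)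
  rw [(hasDerivAt_Kmu hμ hx).deriv]
  ring
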